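/- The L²(dp) norm of the random variable T_N = ∑ (1 / (|j_1|²·|j_3|·|j_4|)) · g_{j_1} g_{j_2} g_{j_3} g_{j_4}, where the sum runs over all (j_1,j_2,j_3,j_4) ∈ 𝒜_4 with 0 < |j_k| ≤ N for all k, j_1 > 0, j_2 > 0, j_3 < 0, j_4 < 0 and |j_3 + j_4| > N, converges to 0 as N → ∞. -/

import Mathlib

open MeasureTheory ProbabilityTheory

/-- The family `(g_n)_{n ∈ ℤ \ {0}}` of centered complex Gaussian random
variables from the paper: `g_n = c (h_n + i l_n)` for `n > 0`, where
`(h_n)_{n>0}` and `(l_n)_{n>0}` are mutually independent standard real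
Gaussians `N(0,1)`, and `g_{-n} = conj (g_n)` for `n > 0`. -/
structure GaussianData (Ω : Type*) [MeasurableSpace Ω] (p : Measure Ω) where
  c : ℝ
  c_pos : 0 < c
  h : ℤ → Ω → ℝ
  l : ℤ → Ω → ℝ
  g : ℤ → Ω → ℂ
  g_def : ∀ n : ℤ, 0 < n → ∀ ω, g n ω = (c : ℂ) * ((h n ω : ℂ) + Complex.I * (l n ω : ℂ))
  g_neg : ∀ n : ℤ, 0 < n → ∀ ω, g (-n) ω = starRingEnd ℂ (g n ω)
  h_meas : ∀ n : ℤ, 0 < n → Measurable (h n)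
  l_meas : ∀ n : ℤ, 0 < n → Measurable (l n)
  h_law : ∀ n : ℤ, 0 < n → p.map (h n) = gaussianReal 0 1
  l_law : ∀ n : ℤ, 0 < n → p.map (l n) = gaussianReal 0 1
  indep : iIndepFun
      (fun nb : {n : ℤ // 0 < n} × Bool => if nb.2 then l nb.1.1 else h nb.1.1) p

open Finset Filter Topology

/-! By the triangle inequality and Cauchy–Schwarz, `‖T_N‖_{L²}` is at most the sum of the
coefficients times a uniform bound on `‖g_{j₁} g_{j₂} g_{j₃} g_{j₄}‖_{L²}`; the latter comes from
AM–GM and the eighth moment of a Gaussian. In the variables `(x, a, b) = (j₁, -j₃, -j₄)` the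
coefficient sum is `∑ 1 / (x² a b)` over `N < a + b ≤ N + x`. As `a + b > N`, `1/(ab)` is at most
`(1/a + 1/b) / N`, and for fixed `x, a` only `x` values of `b` occur, so the sum is at most
`2 H_N² / N = O(log² N / N)`, where `H_N` is the harmonic number. -/

lemma sq_mul_mul_mul_le (a b c d : ℝ) :
    (a * b * c * d) ^ 2 ≤ (a ^ 8 + b ^ 8 + c ^ 8 + d ^ 8) / 4 := by
  nlinarith [sq_nonneg (a ^ 2 * b ^ 2 - c ^ 2 * d ^ 2), sq_nonneg (a ^ 4 - b ^ 4),
    sq_nonneg (c ^ 4 - d ^ 4)]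

lemma inv_mul_le_inv_add_inv_div {a b N : ℝ} (ha : 0 < a) (hb : 0 < b) (hN : 0 < N)
    (h : N ≤ a + b) : (a * b)⁻¹ ≤ (a⁻¹ + b⁻¹) / N :=
  calc (a * b)⁻¹ = N / (a * b * N) := by field_simp
    _ ≤ (a + b) / (a * b * N) := by gcongr
    _ = (a⁻¹ + b⁻¹) / N := by field_simp; ring

lemma card_filter_lt_add_le_add (N x a : ℕ) :
    #{b ∈ Icc 1 N | N < a + b ∧ a + b ≤ N + x} ≤ x := by
  calc #{b ∈ Icc 1 N | N < a + b ∧ a + b ≤ N + x}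
      ≤ #(Ioc (N - a) (N + x - a)) := card_le_card fun b hb => by
        simp only [mem_filter, mem_Icc, mem_Ioc] at hb ⊢; omega
    _ ≤ x := by rw [Nat.card_Ioc]; omega

lemma sum_sum_ite_inv_le (N x : ℕ) :
    ∑ a ∈ Icc 1 N, ∑ b ∈ Icc 1 N, (if N < a + b ∧ a + b ≤ N + x then (a : ℝ)⁻¹ else 0)
      ≤ x * harmonic N := by
  simp only [← sum_filter, sum_const, nsmul_eq_mul, harmonic_eq_sum_Icc, Rat.cast_sum,
    Rat.cast_inv, Rat.cast_natCast, mul_sum]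
  gcongr with a
  exact_mod_cast card_filter_lt_add_le_add N x a

lemma sum_inv_sq_mul_mul_le (N : ℕ) :
    ∑ t ∈ (Icc 1 N ×ˢ Icc 1 N ×ˢ Icc 1 N).filter
        (fun t => N < t.2.1 + t.2.2 ∧ t.2.1 + t.2.2 ≤ N + t.1),
      ((t.1 : ℝ) ^ 2 * t.2.1 * t.2.2)⁻¹ ≤ 2 * harmonic N ^ 2 / N := by
  rcases N.eq_zero_or_pos with rfl | hN
  · simp
  have hpoint : ∀ x ∈ Icc 1 N, ∀ a ∈ Icc 1 N, ∀ b ∈ Icc 1 N,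
      (if N < a + b ∧ a + b ≤ N + x then ((x : ℝ) ^ 2 * a * b)⁻¹ else 0)
        ≤ ((x : ℝ) ^ 2)⁻¹ / N * ((if N < a + b ∧ a + b ≤ N + x then (a : ℝ)⁻¹ else 0)
          + if N < a + b ∧ a + b ≤ N + x then (b : ℝ)⁻¹ else 0) := by
    intro x hx a ha b hb
    simp only [mem_Icc] at hx ha hb
    split_ifs with h
    · rw [mul_assoc, mul_inv, div_mul_comm, mul_comm]
      gcongr
      exact inv_mul_le_inv_add_inv_div (Nat.cast_pos.mpr (by omega))
        (Nat.cast_pos.mpr (by omega)) (Nat.cast_pos.mpr hN)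
        (by exact_mod_cast h.1.le)
    · simp
  have hH : ∑ x ∈ Icc 1 N, (x : ℝ)⁻¹ = harmonic N := by
    simp [harmonic_eq_sum_Icc]
  calc _ = ∑ x ∈ Icc 1 N, ∑ a ∈ Icc 1 N, ∑ b ∈ Icc 1 N,
        (if N < a + b ∧ a + b ≤ N + x then ((x : ℝ) ^ 2 * a * b)⁻¹ else 0) := by
        simp only [sum_filter, sum_product]
    _ ≤ ∑ x ∈ Icc 1 N, ((x : ℝ) ^ 2)⁻¹ / N *
        (∑ a ∈ Icc 1 N, ∑ b ∈ Icc 1 N, (if N < a + b ∧ a + b ≤ N + x then (a : ℝ)⁻¹ else 0)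
          + ∑ a ∈ Icc 1 N, ∑ b ∈ Icc 1 N,
            (if N < a + b ∧ a + b ≤ N + x then (b : ℝ)⁻¹ else 0)) := by
        gcongr with x hx
        rw [← sum_add_distrib, mul_sum]
        gcongr with a ha
        rw [← sum_add_distrib, mul_sum]
        exact sum_le_sum fun b hb => hpoint x hx a ha b hb
    _ ≤ ∑ x ∈ Icc 1 N, ((x : ℝ) ^ 2)⁻¹ / N * (x * harmonic N + x * harmonic N) := by
        gcongr with x hx
        · exact sum_sum_ite_inv_le N x
        · rw [sum_comm]
          simpa only [add_comm] using sum_sum_ite_inv_le N x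
    _ = ∑ x ∈ Icc 1 N, 2 * harmonic N / N * (x : ℝ)⁻¹ := by
        refine sum_congr rfl fun x hx => ?_
        have : (x : ℝ) ≠ 0 := Nat.cast_ne_zero.mpr (by simp only [mem_Icc] at hx; omega)
        field_simp
        ring
    _ = 2 * harmonic N ^ 2 / N := by rw [← mul_sum, hH]; ring

lemma tendsto_harmonic_sq_div_atTop :
    Tendsto (fun N : ℕ => (harmonic N : ℝ) ^ 2 / N) atTop (𝓝 0) := by
  have hlog : Tendsto (fun x : ℝ => (1 + Real.log x) ^ 2 / x) atTop (𝓝 0) := by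
    have h := ((Real.isLittleO_pow_log_id_atTop (n := 0)).add
      ((Real.isLittleO_pow_log_id_atTop (n := 1)).const_mul_left 2)).add
      (Real.isLittleO_pow_log_id_atTop (n := 2))
    refine (h.tendsto_div_nhds_zero).congr fun x => ?_
    simp only [id]
    ring
  refine squeeze_zero (fun N => by positivity) (fun N => ?_)
    (hlog.comp tendsto_natCast_atTop_atTop)
  show _ ≤ (1 + Real.log N) ^ 2 / N
  gcongr
  · exact_mod_cast (by rw [harmonic_eq_sum_Icc]; positivity : (0 : ℚ) ≤ harmonic N)
  · exact harmonic_le_one_add_log N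

noncomputable def tIndexSet (N : ℕ) : Finset (Fin 4 → ℤ) :=
  (Fintype.piFinset (fun _ : Fin 4 => Finset.Icc (-(N : ℤ)) N)).filter
    (fun j => (∀ k, j k ≠ 0) ∧ (∑ k, j k = 0) ∧
      0 < j 0 ∧ 0 < j 1 ∧ j 2 < 0 ∧ j 3 < 0 ∧ |j 2 + j 3| > (N : ℤ))

noncomputable def tCoeff (j : Fin 4 → ℤ) : ℝ := 1 / (|(j 0 : ℝ)| ^ 2 * |(j 2 : ℝ)| * |(j 3 : ℝ)|)

lemma tCoeff_nonneg (j : Fin 4 → ℤ) : 0 ≤ tCoeff j := by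
  unfold tCoeff; positivity

lemma ne_zero_of_mem_tIndexSet {N : ℕ} {j : Fin 4 → ℤ} (hj : j ∈ tIndexSet N) (k : Fin 4) :
    j k ≠ 0 :=
  (mem_filter.mp hj).2.1 k

-- An index `j` is determined by `(j₁, -j₃, -j₄)`, since `j₂ = -j₁ - j₃ - j₄`.
lemma sum_tCoeff_le (N : ℕ) :
    ∑ j ∈ tIndexSet N, tCoeff j ≤
      ∑ t ∈ (Icc 1 N ×ˢ Icc 1 N ×ˢ Icc 1 N).filter
        (fun t => N < t.2.1 + t.2.2 ∧ t.2.1 + t.2.2 ≤ N + t.1),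
      ((t.1 : ℝ) ^ 2 * t.2.1 * t.2.2)⁻¹ := by
  set T := (Icc 1 N ×ˢ Icc 1 N ×ˢ Icc 1 N).filter
    (fun t => N < t.2.1 + t.2.2 ∧ t.2.1 + t.2.2 ≤ N + t.1)
  let ψ : ℕ × ℕ × ℕ → Fin 4 → ℤ := fun t => ![t.1, t.2.1 + t.2.2 - t.1, -t.2.1, -t.2.2]
  have hsub : tIndexSet N ⊆ T.image ψ := by
    intro j hj
    simp only [tIndexSet, mem_filter, Fintype.mem_piFinset, mem_Icc, Fin.sum_univ_four] at hj
    obtain ⟨hbd, -, hsum, h0, h1, h2, h3, hgt⟩ := hj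
    rw [abs_of_neg (by omega)] at hgt
    have := hbd 0; have := hbd 1; have := hbd 2; have := hbd 3
    refine mem_image.mpr ⟨((j 0).toNat, (-j 2).toNat, (-j 3).toNat), ?_, ?_⟩
    · simp only [T, mem_filter, mem_product, mem_Icc]
      omega
    · funext k
      fin_cases k <;>
        simp only [ψ, Fin.isValue, Fin.zero_eta, Fin.mk_one, Fin.reduceFinMk, Matrix.cons_val,
          Matrix.cons_val_zero, Matrix.cons_val_one, Int.ofNat_toNat] <;> omega
  calc ∑ j ∈ tIndexSet N, tCoeff j ≤ ∑ j ∈ T.image ψ, tCoeff j :=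
        sum_le_sum_of_subset_of_nonneg hsub fun j _ _ => tCoeff_nonneg j
    _ ≤ ∑ t ∈ T, tCoeff (ψ t) := sum_image_le_of_nonneg fun j _ => tCoeff_nonneg j
    _ = ∑ t ∈ T, ((t.1 : ℝ) ^ 2 * t.2.1 * t.2.2)⁻¹ := by
        refine sum_congr rfl fun t _ => ?_
        simp [tCoeff, ψ]

lemma integrable_pow_of_map_eq_gaussianReal {Ω : Type*} [MeasurableSpace Ω] {p : Measure Ω}
    {X : Ω → ℝ} (hX : Measurable X) {μ : ℝ} {v : NNReal} (hlaw : p.map X = gaussianReal μ v)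
    (n : ℕ) : Integrable (fun ω => X ω ^ n) p := by
  have h : Integrable (fun x : ℝ => x ^ n) (gaussianReal μ v) :=
    (memLp_id_gaussianReal n).integrable_norm_pow'.mono' (by fun_prop)
      (ae_of_all _ fun x => by simp [norm_pow])
  rw [← hlaw] at h
  exact (integrable_map_measure (measurable_id.pow_const n).aestronglyMeasurable
    hX.aemeasurable).mp h

lemma integral_norm_sum_mul_sq_le {Ω ι : Type*} [MeasurableSpace Ω] {μ : Measure Ω}
    (s : Finset ι) {a : ι → ℝ} (ha : ∀ i ∈ s, 0 ≤ a i) {Y : ι → Ω → ℂ} {M : ℝ}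
    (hY : ∀ i ∈ s, Integrable (fun ω => ‖Y i ω‖ ^ 2) μ)
    (hM : ∀ i ∈ s, ∫ ω, ‖Y i ω‖ ^ 2 ∂μ ≤ M) :
    ∫ ω, ‖∑ i ∈ s, (a i : ℂ) * Y i ω‖ ^ 2 ∂μ ≤ M * (∑ i ∈ s, a i) ^ 2 := by
  set A := ∑ i ∈ s, a i
  have hA : 0 ≤ A := sum_nonneg ha
  have hpoint : ∀ ω, ‖∑ i ∈ s, (a i : ℂ) * Y i ω‖ ^ 2 ≤ A * ∑ i ∈ s, a i * ‖Y i ω‖ ^ 2 := by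
    intro ω
    have htri : ‖∑ i ∈ s, (a i : ℂ) * Y i ω‖ ≤ ∑ i ∈ s, a i * ‖Y i ω‖ :=
      (norm_sum_le _ _).trans_eq <| sum_congr rfl fun i hi => by
        rw [norm_mul, Complex.norm_real, Real.norm_of_nonneg (ha i hi)]
    calc _ ≤ (∑ i ∈ s, a i * ‖Y i ω‖) ^ 2 := by gcongr
      _ ≤ A * ∑ i ∈ s, a i * ‖Y i ω‖ ^ 2 :=
        sum_sq_le_sum_mul_sum_of_sq_le_mul s ha
          (fun i hi => mul_nonneg (ha i hi) (by positivity)) fun i _ => le_of_eq (by ring)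
  have hint : ∀ i ∈ s, Integrable (fun ω => a i * ‖Y i ω‖ ^ 2) μ :=
    fun i hi => (hY i hi).const_mul _
  calc _ ≤ ∫ ω, A * ∑ i ∈ s, a i * ‖Y i ω‖ ^ 2 ∂μ :=
        integral_mono_of_nonneg (ae_of_all _ fun ω => by positivity)
          ((integrable_finsetSum s hint).const_mul A) (ae_of_all _ hpoint)
    _ = A * ∑ i ∈ s, a i * ∫ ω, ‖Y i ω‖ ^ 2 ∂μ := by
        rw [integral_const_mul, integral_finsetSum s hint]
        simp only [integral_const_mul]
    _ ≤ A * ∑ i ∈ s, a i * M := by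
        gcongr with i hi
        · exact ha i hi
        · exact hM i hi
    _ = M * A ^ 2 := by rw [← sum_mul]; ring

namespace GaussianData

variable {Ω : Type*} [MeasurableSpace Ω] {p : Measure Ω} (G : GaussianData Ω p) {n : ℤ}

lemma measurable_g (hn : n ≠ 0) : Measurable (G.g n) := by
  have hpos : ∀ m, 0 < m → Measurable (G.g m) := fun m hm => by
    have := G.h_meas m hm
    have := G.l_meas m hm
    rw [funext (G.g_def m hm)]
    fun_prop
  rcases hn.lt_or_gt with hn | hn
  · rw [show G.g n = fun ω => starRingEnd ℂ (G.g (-n) ω) from funext fun ω => by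
      simpa using G.g_neg (-n) (by omega) ω]
    exact Complex.continuous_conj.measurable.comp (hpos (-n) (by omega))
  · exact hpos n hn

lemma norm_g_eq_norm_g_abs (n : ℤ) (ω : Ω) : ‖G.g n ω‖ = ‖G.g |n| ω‖ := by
  rcases le_or_gt 0 n with hn | hn
  · rw [abs_of_nonneg hn]
  · rw [abs_of_neg hn]
    simpa using congrArg norm (G.g_neg (-n) (by omega) ω)

lemma norm_g_sq (hn : 0 < n) (ω : Ω) :
    ‖G.g n ω‖ ^ 2 = G.c ^ 2 * (G.h n ω ^ 2 + G.l n ω ^ 2) := by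
  rw [G.g_def n hn ω, ← Complex.normSq_eq_norm_sq, Complex.normSq_apply]
  simp only [Complex.mul_re, Complex.mul_im, Complex.add_re, Complex.add_im, Complex.ofReal_re,
    Complex.ofReal_im, Complex.I_re, Complex.I_im]
  ring

lemma norm_g_pow_eight_le (hn : 0 < n) (ω : Ω) :
    ‖G.g n ω‖ ^ 8 ≤ 8 * G.c ^ 8 * (G.h n ω ^ 8 + G.l n ω ^ 8) :=
  calc ‖G.g n ω‖ ^ 8 = G.c ^ 8 * (G.h n ω ^ 2 + G.l n ω ^ 2) ^ 4 := by
        rw [show ‖G.g n ω‖ ^ 8 = (‖G.g n ω‖ ^ 2) ^ 4 by ring, G.norm_g_sq hn]; ring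
    _ ≤ G.c ^ 8 * (2 ^ 3 * ((G.h n ω ^ 2) ^ 4 + (G.l n ω ^ 2) ^ 4)) := by
        gcongr
        exact add_pow_le (sq_nonneg _) (sq_nonneg _) 4
    _ = 8 * G.c ^ 8 * (G.h n ω ^ 8 + G.l n ω ^ 8) := by ring

lemma integrable_norm_g_pow_eight (hn : n ≠ 0) :
    Integrable (fun ω => ‖G.g n ω‖ ^ 8) p := by
  have hpos : 0 < |n| := abs_pos.mpr hn
  simp_rw [G.norm_g_eq_norm_g_abs n]
  refine Integrable.mono' ((((integrable_pow_of_map_eq_gaussianReal (G.h_meas _ hpos)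
    (G.h_law _ hpos) 8).add (integrable_pow_of_map_eq_gaussianReal (G.l_meas _ hpos)
    (G.l_law _ hpos) 8)).const_mul (8 * G.c ^ 8)))
    ((G.measurable_g hpos.ne').norm.pow_const 8).aestronglyMeasurable
    (ae_of_all _ fun ω => ?_)
  rw [Real.norm_of_nonneg (by positivity)]
  exact G.norm_g_pow_eight_le hpos ω

lemma integral_norm_g_pow_eight_le (hn : n ≠ 0) :
    ∫ ω, ‖G.g n ω‖ ^ 8 ∂p ≤ 16 * G.c ^ 8 * ∫ x, x ^ 8 ∂gaussianReal 0 1 := by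
  have hpos : 0 < |n| := abs_pos.mpr hn
  have hh := integrable_pow_of_map_eq_gaussianReal (G.h_meas _ hpos) (G.h_law _ hpos) 8
  have hl := integrable_pow_of_map_eq_gaussianReal (G.l_meas _ hpos) (G.l_law _ hpos) 8
  have hmoment : ∀ X : Ω → ℝ, Measurable X → p.map X = gaussianReal 0 1 →
      ∫ ω, X ω ^ 8 ∂p = ∫ x, x ^ 8 ∂gaussianReal 0 1 := fun X hX hlaw => by
    rw [← hlaw, integral_map hX.aemeasurable (by fun_prop)]
  simp_rw [G.norm_g_eq_norm_g_abs n]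
  calc _ ≤ ∫ ω, 8 * G.c ^ 8 * (G.h |n| ω ^ 8 + G.l |n| ω ^ 8) ∂p :=
        integral_mono_of_nonneg (ae_of_all _ fun ω => by positivity) ((hh.add hl).const_mul _)
          (ae_of_all _ (G.norm_g_pow_eight_le hpos))
    _ = _ := by
        rw [integral_const_mul, integral_add hh hl, hmoment _ (G.h_meas _ hpos) (G.h_law _ hpos),
          hmoment _ (G.l_meas _ hpos) (G.l_law _ hpos)]
        ring

lemma sq_norm_prod_g_le (j : Fin 4 → ℤ) (ω : Ω) :
    ‖∏ k, G.g (j k) ω‖ ^ 2 ≤ (∑ k, ‖G.g (j k) ω‖ ^ 8) / 4 := by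
  rw [norm_prod, Fin.prod_univ_four, Fin.sum_univ_four]
  exact sq_mul_mul_mul_le _ _ _ _

lemma integrable_sq_norm_prod_g {j : Fin 4 → ℤ} (hj : ∀ k, j k ≠ 0) :
    Integrable (fun ω => ‖∏ k, G.g (j k) ω‖ ^ 2) p :=
  ((integrable_finsetSum _ fun k _ => G.integrable_norm_g_pow_eight (hj k)).div_const 4).mono'
    ((Finset.measurable_prod _ fun k _ => G.measurable_g (hj k)).norm.pow_const
      2).aestronglyMeasurable
    (ae_of_all _ fun ω => by
      rw [Real.norm_of_nonneg (by positivity)]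
      exact G.sq_norm_prod_g_le j ω)

lemma integral_sq_norm_prod_g_le {j : Fin 4 → ℤ} (hj : ∀ k, j k ≠ 0) :
    ∫ ω, ‖∏ k, G.g (j k) ω‖ ^ 2 ∂p ≤ 16 * G.c ^ 8 * ∫ x, x ^ 8 ∂gaussianReal 0 1 := by
  have hint := fun k (_ : k ∈ univ) => G.integrable_norm_g_pow_eight (hj k)
  calc _ ≤ ∫ ω, (∑ k, ‖G.g (j k) ω‖ ^ 8) / 4 ∂p :=
        integral_mono_of_nonneg (ae_of_all _ fun ω => by positivity)
          ((integrable_finsetSum _ hint).div_const 4) (ae_of_all _ (G.sq_norm_prod_g_le j))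
    _ ≤ (∑ _k : Fin 4, 16 * G.c ^ 8 * ∫ x, x ^ 8 ∂gaussianReal 0 1) / 4 := by
        rw [integral_div, integral_finsetSum _ hint]
        gcongr with k
        exact G.integral_norm_g_pow_eight_le (hj k)
    _ = _ := by simp

end GaussianData

theorem L2_norm_T_N_tendsto_zero_general
    {Ω : Type*} [MeasurableSpace Ω] (p : Measure Ω)
    (G : GaussianData Ω p) :
    Filter.Tendsto (fun N : ℕ =>
      Real.sqrt (∫ ω, (norm
        (∑ j ∈ (Fintype.piFinset (fun _ : Fin 4 => Finset.Icc (-(N : ℤ)) N)).filter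
            (fun j => (∀ k, j k ≠ 0) ∧ (∑ k, j k = 0) ∧
              0 < j 0 ∧ 0 < j 1 ∧ j 2 < 0 ∧ j 3 < 0 ∧ |j 2 + j 3| > (N : ℤ)),
          ((1 / (|(j 0 : ℝ)| ^ 2 * |(j 2 : ℝ)| * |(j 3 : ℝ)|) : ℝ) : ℂ) *
            ∏ k, G.g (j k) ω)) ^ 2 ∂p))
      Filter.atTop (nhds 0) := by
  set M := 16 * G.c ^ 8 * ∫ x, x ^ 8 ∂gaussianReal 0 1
  have hbound : ∀ N : ℕ, Real.sqrt (∫ ω, ‖∑ j ∈ tIndexSet N, (tCoeff j : ℂ) *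
      ∏ k, G.g (j k) ω‖ ^ 2 ∂p) ≤ Real.sqrt M * (2 * harmonic N ^ 2 / N) := fun N => by
    have hL2 := integral_norm_sum_mul_sq_le (tIndexSet N) (fun j _ => tCoeff_nonneg j)
      (fun j hj => G.integrable_sq_norm_prod_g (ne_zero_of_mem_tIndexSet hj))
      (fun j hj => G.integral_sq_norm_prod_g_le (ne_zero_of_mem_tIndexSet hj))
    calc _ ≤ Real.sqrt (M * (∑ j ∈ tIndexSet N, tCoeff j) ^ 2) := Real.sqrt_le_sqrt hL2
      _ = Real.sqrt M * ∑ j ∈ tIndexSet N, tCoeff j := by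
        rw [Real.sqrt_mul' _ (sq_nonneg _), Real.sqrt_sq (sum_nonneg fun j _ => tCoeff_nonneg j)]
      _ ≤ Real.sqrt M * (2 * harmonic N ^ 2 / N) := by
        gcongr
        exact (sum_tCoeff_le N).trans (sum_inv_sq_mul_mul_le N)
  refine squeeze_zero (fun N => Real.sqrt_nonneg _) hbound ?_
  simpa [mul_div_assoc] using (tendsto_harmonic_sq_div_atTop.const_mul 2).const_mul (Real.sqrt M)

/-- The `L²(dp)` norm of
`T_N = ∑ (1/(|j_1|² |j_3| |j_4|)) g_{j_1} g_{j_2} g_{j_3} g_{j_4}`,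
summed over `(j_1,j_2,j_3,j_4) ∈ 𝒜_4` with `0 < |j_k| ≤ N`, `j_1, j_2 > 0`,
`j_3, j_4 < 0` and `|j_3 + j_4| > N`, tends to `0` as `N → ∞`. -/
theorem L2_norm_T_N_tendsto_zero
    {Ω : Type*} [MeasurableSpace Ω] (p : Measure Ω) [IsProbabilityMeasure p]
    (G : GaussianData Ω p) :
    Filter.Tendsto (fun N : ℕ =>
      Real.sqrt (∫ ω, (norm
        (∑ j ∈ (Fintype.piFinset (fun _ : Fin 4 => Finset.Icc (-(N : ℤ)) N)).filter
            (fun j => (∀ k, j k ≠ 0) ∧ (∑ k, j k = 0) ∧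
              0 < j 0 ∧ 0 < j 1 ∧ j 2 < 0 ∧ j 3 < 0 ∧ |j 2 + j 3| > (N : ℤ)),
          ((1 / (|(j 0 : ℝ)| ^ 2 * |(j 2 : ℝ)| * |(j 3 : ℝ)|) : ℝ) : ℂ) *
            ∏ k, G.g (j k) ω)) ^ 2 ∂p))
      Filter.atTop (nhds 0) :=
  L2_norm_T_N_tendsto_zero_general p G
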